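/- Under the standing assumptions on the 3-block Bregman ADMM, if the sequence {(x^k, y^k, z^k)} is bounded, then the dual sequence {p^k} is bounded, the series ∑_{k≥1} ‖w^{k+1} − w^k‖² converges (is finite), and in particular ‖w^{k+1} − w^k‖ → 0 as k → ∞. -/

import Mathlib

open RealInnerProductSpace Filter

noncomputable section

/-- Euclidean space `ℝ^n`. -/
abbrev Eu (n : ℕ) := EuclideanSpace ℝ (Fin n)

/-- The Bregman distance `Δ_φ(u,v) = φ(u) − φ(v) − ⟨∇φ(v), u−v⟩` associated with a
differentiable function `φ` whose gradient is `φ'`. -/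
def Breg {n : ℕ} (φ : Eu n → ℝ) (φ' : Eu n → Eu n) (u v : Eu n) : ℝ :=
  φ u - φ v - ⟪φ' v, u - v⟫

/-- `F` is `μ`-strongly convex iff `F − (μ/2)‖·‖²` is convex. -/
def StrongConvex {n : ℕ} (μ : ℝ) (F : Eu n → ℝ) : Prop :=
  ConvexOn ℝ Set.univ (fun u => F u - μ / 2 * ‖u‖ ^ 2)

/-- The augmented Lagrangian
`L_α(x,y,z,p) = f(x)+g(y)+h(z)+⟨p, Ax+By+Cz⟩+(α/2)‖Ax+By+Cz‖²`. -/
def Lag {n₁ n₂ n₃ m : ℕ} (f : Eu n₁ → ℝ) (g : Eu n₂ → ℝ) (h : Eu n₃ → ℝ)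
    (A : Eu n₁ →L[ℝ] Eu m) (B : Eu n₂ →L[ℝ] Eu m) (C : Eu n₃ →L[ℝ] Eu m)
    (α : ℝ) (x : Eu n₁) (y : Eu n₂) (z : Eu n₃) (p : Eu m) : ℝ :=
  f x + g y + h z + ⟪p, A x + B y + C z⟫ + α / 2 * ‖A x + B y + C z‖ ^ 2

/-- All the data and standing assumptions of the 3-block Bregman ADMM:
objective functions `f, g, h`, Bregman kernels `φ₁, φ₂, φ₃` (with gradients
`φ₁', φ₂', φ₃'`, and `h'` the gradient of `h`), matrices `A, B, C` (as linear maps),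
parameters, iterate sequences `x, y, z, p`, and the standing hypotheses
(lower semicontinuity of `f, g`; differentiability with Lipschitz gradients;
convexity of kernels; the strong-convexity alternatives; quantitative full row rank
of `C`; the lower bound on `α`; and the BADMM update rules, where each of the three
primal updates is a global minimizer of the corresponding subproblem). -/
structure BADMM (n₁ n₂ n₃ m : ℕ) where
  f : Eu n₁ → ℝ
  g : Eu n₂ → ℝ
  h : Eu n₃ → ℝ
  φ₁ : Eu n₁ → ℝ
  φ₂ : Eu n₂ → ℝ
  φ₃ : Eu n₃ → ℝ
  h' : Eu n₃ → Eu n₃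
  φ₁' : Eu n₁ → Eu n₁
  φ₂' : Eu n₂ → Eu n₂
  φ₃' : Eu n₃ → Eu n₃
  A : Eu n₁ →L[ℝ] Eu m
  B : Eu n₂ →L[ℝ] Eu m
  C : Eu n₃ →L[ℝ] Eu m
  α : ℝ
  ℓh : ℝ
  ℓ₁ : ℝ
  ℓ₂ : ℝ
  ℓ₃ : ℝ
  μ₁ : ℝ
  μ₂ : ℝ
  μ₃ : ℝ
  σC : ℝ
  x : ℕ → Eu n₁
  y : ℕ → Eu n₂
  z : ℕ → Eu n₃
  p : ℕ → Eu m
  hα_pos : 0 < α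
  hf_lsc : LowerSemicontinuous f
  hg_lsc : LowerSemicontinuous g
  hgrad_h : ∀ v, HasGradientAt h (h' v) v
  hgrad_φ₁ : ∀ v, HasGradientAt φ₁ (φ₁' v) v
  hgrad_φ₂ : ∀ v, HasGradientAt φ₂ (φ₂' v) v
  hgrad_φ₃ : ∀ v, HasGradientAt φ₃ (φ₃' v) v
  hℓh_nonneg : 0 ≤ ℓh
  hℓ₁_nonneg : 0 ≤ ℓ₁
  hℓ₂_nonneg : 0 ≤ ℓ₂
  hℓ₃_nonneg : 0 ≤ ℓ₃
  hlip_h : ∀ a b, ‖h' a - h' b‖ ≤ ℓh * ‖a - b‖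
  hlip_φ₁ : ∀ a b, ‖φ₁' a - φ₁' b‖ ≤ ℓ₁ * ‖a - b‖
  hlip_φ₂ : ∀ a b, ‖φ₂' a - φ₂' b‖ ≤ ℓ₂ * ‖a - b‖
  hlip_φ₃ : ∀ a b, ‖φ₃' a - φ₃' b‖ ≤ ℓ₃ * ‖a - b‖
  hφ₁_convex : ConvexOn ℝ Set.univ φ₁
  hφ₂_convex : ConvexOn ℝ Set.univ φ₂
  hφ₃_convex : ConvexOn ℝ Set.univ φ₃
  hμ₁_pos : 0 < μ₁
  hμ₂_pos : 0 < μ₂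
  hμ₃_pos : 0 < μ₃
  hsc₁ : StrongConvex μ₁ f ∨ StrongConvex μ₁ φ₁
  hsc₂ : StrongConvex μ₂ g ∨ StrongConvex μ₂ φ₂
  hsc₃ : StrongConvex μ₃ h ∨ StrongConvex μ₃ φ₃
  hσC_pos : 0 < σC
  hC_rank : ∀ u : Eu m, σC * ‖u‖ ^ 2 ≤ ‖(ContinuousLinearMap.adjoint C) u‖ ^ 2
  hα_large : 4 * ((ℓh + ℓ₃) ^ 2 + ℓ₃ ^ 2) / (μ₃ * σC) < α
  hx_min : ∀ k, ∀ ξ : Eu n₁,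
    Lag f g h A B C α (x (k+1)) (y k) (z k) (p k) + Breg φ₁ φ₁' (x (k+1)) (x k) ≤
      Lag f g h A B C α ξ (y k) (z k) (p k) + Breg φ₁ φ₁' ξ (x k)
  hy_min : ∀ k, ∀ ξ : Eu n₂,
    Lag f g h A B C α (x (k+1)) (y (k+1)) (z k) (p k) + Breg φ₂ φ₂' (y (k+1)) (y k) ≤
      Lag f g h A B C α (x (k+1)) ξ (z k) (p k) + Breg φ₂ φ₂' ξ (y k)
  hz_min : ∀ k, ∀ ξ : Eu n₃,
    Lag f g h A B C α (x (k+1)) (y (k+1)) (z (k+1)) (p k) + Breg φ₃ φ₃' (z (k+1)) (z k) ≤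
      Lag f g h A B C α (x (k+1)) (y (k+1)) ξ (p k) + Breg φ₃ φ₃' ξ (z k)
  hp_upd : ∀ k, p (k+1) = p k + α • (A (x (k+1)) + B (y (k+1)) + C (z (k+1)))

namespace BADMM

variable {n₁ n₂ n₃ m : ℕ} (P : BADMM n₁ n₂ n₃ m)

/-- `σ₀ = 2ℓ₃²/(ασ_C)`. -/
def σ0 : ℝ := 2 * P.ℓ₃ ^ 2 / (P.α * P.σC)

/-- `σ₁ = (1/2)·min(μ₁, μ₂, μ₃ − 4(ℓ_h+ℓ₃)²/(ασ_C) − 4ℓ₃²/(ασ_C))`. -/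
def σ1 : ℝ :=
  (1 / 2) * min P.μ₁ (min P.μ₂
    (P.μ₃ - 4 * (P.ℓh + P.ℓ₃) ^ 2 / (P.α * P.σC) - 4 * P.ℓ₃ ^ 2 / (P.α * P.σC)))

/-- The augmented Lagrangian of the problem, `L_α`. -/
def L (x : Eu n₁) (y : Eu n₂) (z : Eu n₃) (p : Eu m) : ℝ :=
  Lag P.f P.g P.h P.A P.B P.C P.α x y z p

/-- `L̂(x,y,z,p,ẑ) = L_α(x,y,z,p) + σ₀‖z−ẑ‖²`. -/
def Lhat (x : Eu n₁) (y : Eu n₂) (z : Eu n₃) (p : Eu m) (zh : Eu n₃) : ℝ :=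
  P.L x y z p + P.σ0 * ‖z - zh‖ ^ 2

/-- `‖w^{k+1}−w^k‖²`. -/
def dw2 (k : ℕ) : ℝ :=
  ‖P.x (k+1) - P.x k‖ ^ 2 + ‖P.y (k+1) - P.y k‖ ^ 2 +
    ‖P.z (k+1) - P.z k‖ ^ 2 + ‖P.p (k+1) - P.p k‖ ^ 2

end BADMM

/-!
Each primal update is a Bregman proximal step on a function of the form "block objective plus a
convex coupling term", so it lowers `L_α` by `(μᵢ/2)‖Δ‖²` (the strong convexity sits either in the
objective, giving quadratic growth around the minimizer, or in the kernel, giving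
`Δ_φ ≥ (μ/2)‖·‖²`); the dual update raises `L_α` by `‖Δp‖²/α`. First-order optimality of the
`z`-update reads `Cᵀp^{k+1} = ∇φ₃(z^k) − ∇φ₃(z^{k+1}) − ∇h(z^{k+1})`, so by the full row rank of
`C` the dual iterates are bounded when the `z`-iterates are, and each dual step is controlled by
the last two `z`-steps. For `α` above the threshold this makes `L̂` along the iterates decrease by
`σ₁` times the squared primal step; since it is bounded below on bounded iterates, the primal
steps are square-summable, and hence so are the dual steps.
-/

open Set

section InnerProductSpace

variable {E F : Type*} [NormedAddCommGroup E] [InnerProductSpace ℝ E]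
  [NormedAddCommGroup F] [InnerProductSpace ℝ F]

theorem StrongConvexOn.add_inner_add_sq_norm_le [CompleteSpace E] {μ : ℝ} {φ : E → ℝ}
    {g v : E} (hφ : StrongConvexOn univ μ φ) (hg : HasGradientAt φ g v) (u : E) :
    φ v + ⟪g, u - v⟫ + μ / 2 * ‖u - v‖ ^ 2 ≤ φ u := by
  set d := u - v
  set line : ℝ →ᵃ[ℝ] E := AffineMap.lineMap v u
  have hline : ∀ t : ℝ, line t = v + t • d := fun t => by
    simp [line, AffineMap.lineMap_apply_module', d, add_comm]
  have hconv : ConvexOn ℝ univ fun t : ℝ => φ (line t) - μ / 2 * ‖line t‖ ^ 2 :=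
    (strongConvexOn_iff_convex.mp hφ).comp_affineMap line
  have hderiv : HasDerivAt (fun t : ℝ => φ (line t) - μ / 2 * ‖line t‖ ^ 2)
      (⟪g, d⟫ - μ * ⟪v, d⟫) 0 := by
    have hl : HasDerivAt (fun t : ℝ => line t) d 0 := by
      simp only [hline]
      simpa using ((hasDerivAt_id (0 : ℝ)).smul_const d).const_add v
    have h1 := (hg.hasFDerivAt.comp_hasDerivAt_of_eq (0 : ℝ) hl (by simp [hline]))
    have h2 := (hl.norm_sq).const_mul (μ / 2)
    refine (h1.sub h2).congr_deriv ?_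
    simp [hline, InnerProductSpace.toDual_apply_apply]
    ring
  have := hconv.le_slope_of_hasDerivAt (mem_univ 0) (mem_univ 1) one_pos hderiv
  rw [slope_def_field] at this
  simp only [hline, zero_smul, add_zero, one_smul, sub_zero, div_one] at this
  rw [norm_add_sq_real, show v + d = u by simp [d]] at this
  linarith

theorem StrongConvexOn.add_sq_norm_sub_le_of_isMinOn {μ : ℝ} {F : E → ℝ} {a : E}
    (hF : StrongConvexOn univ μ F) (ha : IsMinOn F univ a) (ξ : E) :
    F a + μ / 2 * ‖ξ - a‖ ^ 2 ≤ F ξ := by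
  set c := μ / 2 * ‖ξ - a‖ ^ 2 with hc
  have hbound : ∀ t ∈ Ioo (0 : ℝ) 1, F a + (1 - t) * c ≤ F ξ := by
    rintro t ⟨ht0, ht1⟩
    have hconv := hF.2 (mem_univ ξ) (mem_univ a) ht0.le (sub_nonneg.2 ht1.le) (add_sub_cancel t 1)
    have hmin : F a ≤ F (t • ξ + (1 - t) • a) := ha (mem_univ _)
    simp only [smul_eq_mul, ← hc] at hconv
    refine le_of_mul_le_mul_left ?_ ht0
    linarith
  have hlim : Tendsto (fun t : ℝ => F a + (1 - t) * c) (nhdsWithin 0 (Ioi 0))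
      (nhds (F a + c)) := by
    have hcont : Continuous fun t : ℝ => F a + (1 - t) * c := by fun_prop
    simpa using (hcont.tendsto 0).mono_left nhdsWithin_le_nhds
  exact le_of_tendsto hlim (mem_of_superset (Ioo_mem_nhdsGT one_pos) hbound)

theorem StrongConvexOn.add_convexOn {μ : ℝ} {F G : E → ℝ} (hF : StrongConvexOn univ μ F)
    (hG : ConvexOn ℝ univ G) : StrongConvexOn univ μ fun ξ => F ξ + G ξ := by
  have h := hF.add (uniformConvexOn_zero.mpr hG)
  rwa [add_zero] at h

theorem convexOn_inner_add_half_mul_sq_norm (p c : F) {α : ℝ} (hα : 0 ≤ α) (T : E →L[ℝ] F) :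
    ConvexOn ℝ univ fun ξ => ⟪p, T ξ + c⟫ + α / 2 * ‖T ξ + c‖ ^ 2 := by
  have hsq : ConvexOn ℝ univ fun u : F => ‖u‖ ^ 2 :=
    convexOn_univ_norm.pow (fun u _ => norm_nonneg u) 2
  have hq : ConvexOn ℝ univ fun u : F => ⟪p, u⟫ + α / 2 * ‖u‖ ^ 2 :=
    ((innerₛₗ ℝ p).convexOn convex_univ).add (hsq.smul (by positivity))
  refine ((hq.translate_right c).comp_linearMap T.toLinearMap).congr fun ξ _ => ?_
  simp [add_comm c]

theorem HasGradientAt.add [CompleteSpace E] {f g : E → ℝ} {f' g' x : E} (hf : HasGradientAt f f' x)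
    (hg : HasGradientAt g g' x) : HasGradientAt (fun y => f y + g y) (f' + g') x := by
  rw [hasGradientAt_iff_hasFDerivAt, map_add]
  exact hf.hasFDerivAt.add hg.hasFDerivAt

theorem IsLocalMin.hasGradientAt_eq_zero [CompleteSpace E] {f : E → ℝ} {f' x : E}
    (hmin : IsLocalMin f x) (hf : HasGradientAt f f' x) : f' = 0 :=
  (InnerProductSpace.toDual ℝ E).map_eq_zero_iff.mp (hmin.hasFDerivAt_eq_zero hf.hasFDerivAt)

theorem hasGradientAt_inner_add_half_mul_sq_norm [CompleteSpace E] [CompleteSpace F] (p c : F)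
    (α : ℝ) (T : E →L[ℝ] F) (ξ : E) :
    HasGradientAt (fun ξ => ⟪p, T ξ + c⟫ + α / 2 * ‖T ξ + c‖ ^ 2)
      (ContinuousLinearMap.adjoint T (p + α • (T ξ + c))) ξ := by
  have hT : HasFDerivAt (fun ξ => T ξ + c) T ξ := T.hasFDerivAt.add_const c
  have h := ((innerSL ℝ p).hasFDerivAt.comp ξ hT).add (hT.norm_sq.const_mul (α / 2))
  rw [hasGradientAt_iff_hasFDerivAt]
  refine h.congr_fderiv ?_
  ext d
  simp [ContinuousLinearMap.adjoint_inner_left]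
  ring

end InnerProductSpace

theorem norm_le_of_lipschitz_of_norm_le {E F : Type*} [SeminormedAddCommGroup E]
    [SeminormedAddCommGroup F] {G : E → F} {ℓ M : ℝ} (hℓ : 0 ≤ ℓ)
    (hG : ∀ a b, ‖G a - G b‖ ≤ ℓ * ‖a - b‖) {u : E} (hu : ‖u‖ ≤ M) : ‖G u‖ ≤ ℓ * M + ‖G 0‖ := by
  have := hG u 0
  rw [sub_zero] at this
  linarith [norm_le_insert' (G u) (G 0), mul_le_mul_of_nonneg_left hu hℓ]

theorem summable_of_succ_add_le {a b : ℕ → ℝ} {c : ℝ} (hb : ∀ k, 0 ≤ b k)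
    (hab : ∀ k, a (k+1) + b k ≤ a k) (hc : ∀ k, c ≤ a k) : Summable b := by
  have htel : ∀ N, a N + ∑ i ∈ Finset.range N, b i ≤ a 0 := by
    intro N
    induction N with
    | zero => simp
    | succ N ih => rw [Finset.sum_range_succ]; linarith [hab N]
  exact summable_of_sum_range_le (c := a 0 - c) hb fun N => by linarith [htel N, hc N]

section Bregman

variable {n : ℕ} {φ : Eu n → ℝ} {φ' : Eu n → Eu n}

@[simp]
theorem Breg_self (v : Eu n) : Breg φ φ' v v = 0 := by
  simp [Breg]

theorem half_mul_sq_norm_le_Breg {μ : ℝ} (hφ : StrongConvexOn univ μ φ) {v : Eu n}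
    (hφ' : HasGradientAt φ (φ' v) v) (u : Eu n) :
    μ / 2 * ‖u - v‖ ^ 2 ≤ Breg φ φ' u v := by
  have := hφ.add_inner_add_sq_norm_le hφ' u
  rw [Breg]
  linarith

theorem Breg_nonneg (hφ : ConvexOn ℝ univ φ) {v : Eu n} (hφ' : HasGradientAt φ (φ' v) v)
    (u : Eu n) : 0 ≤ Breg φ φ' u v := by
  simpa using half_mul_sq_norm_le_Breg (strongConvexOn_zero.mpr hφ) hφ' u

theorem convexOn_Breg (hφ : ConvexOn ℝ univ φ) (v : Eu n) :
    ConvexOn ℝ univ fun u => Breg φ φ' u v := by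
  have := (hφ.add ((-innerₛₗ ℝ (φ' v)).convexOn convex_univ)).add_const (⟪φ' v, v⟫ - φ v)
  refine this.congr fun u _ => ?_
  simp [Breg, inner_sub_right]
  ring

theorem hasGradientAt_Breg {u : Eu n} (hφ : HasGradientAt φ (φ' u) u) (v : Eu n) :
    HasGradientAt (fun w => Breg φ φ' w v) (φ' u - φ' v) u := by
  have h := (hφ.hasFDerivAt.sub_const (φ v)).sub
    (((innerSL ℝ (φ' v)).hasFDerivAt).sub_const ⟪φ' v, v⟫)
  rw [hasGradientAt_iff_hasFDerivAt]
  refine (h.congr_fderiv ?_).congr_of_eventuallyEq (Eventually.of_forall fun w => ?_)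
  · ext d
    simp
  · simp [Breg, inner_sub_right]

theorem bregman_prox_step_descent {F Φ : Eu n → ℝ} {μ : ℝ} {a b : Eu n}
    (hΦF : ConvexOn ℝ univ fun ξ => Φ ξ - F ξ) (hφ : ConvexOn ℝ univ φ)
    (hφ' : HasGradientAt φ (φ' b) b) (hsc : StrongConvexOn univ μ F ∨ StrongConvexOn univ μ φ)
    (hmin : ∀ ξ, Φ a + Breg φ φ' a b ≤ Φ ξ + Breg φ φ' ξ b) :
    Φ a + μ / 2 * ‖a - b‖ ^ 2 ≤ Φ b := by
  have hb := hmin b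
  rw [Breg_self, add_zero] at hb
  rcases hsc with hF | hφμ
  · have hstrong : StrongConvexOn univ μ fun ξ => F ξ + ((Φ ξ - F ξ) + Breg φ φ' ξ b) :=
      hF.add_convexOn (hΦF.add (convexOn_Breg hφ b))
    have hgrowth := hstrong.add_sq_norm_sub_le_of_isMinOn (a := a)
      (fun ξ _ => by simp only [mem_ofPred_eq]; linarith [hmin ξ]) b
    have := Breg_nonneg hφ hφ' a
    simp only [add_sub_cancel, Breg_self, add_zero, norm_sub_rev b a] at hgrowth
    linarith
  · have := half_mul_sq_norm_le_Breg hφμ hφ' a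
    linarith

theorem bregman_prox_step_first_order {Φ : Eu n → ℝ} {G a b : Eu n}
    (hΦ : HasGradientAt Φ G a) (hφ : HasGradientAt φ (φ' a) a)
    (hmin : ∀ ξ, Φ a + Breg φ φ' a b ≤ Φ ξ + Breg φ φ' ξ b) :
    G + φ' a - φ' b = 0 := by
  rw [add_sub_assoc]
  exact IsLocalMin.hasGradientAt_eq_zero (Eventually.of_forall hmin)
    (hΦ.add (hasGradientAt_Breg hφ b))

end Bregman

namespace BADMM

variable {n₁ n₂ n₃ m : ℕ} (P : BADMM n₁ n₂ n₃ m)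

theorem convexOn_L_sub_f (y : Eu n₂) (z : Eu n₃) (p : Eu m) :
    ConvexOn ℝ univ fun ξ => P.L ξ y z p - P.f ξ :=
  ((convexOn_inner_add_half_mul_sq_norm p (P.B y + P.C z) P.hα_pos.le P.A).add_const
    (P.g y + P.h z)).congr fun ξ _ => by
      simp only [L, Lag, Pi.add_apply, add_assoc (P.A ξ)]
      ring

theorem convexOn_L_sub_g (x : Eu n₁) (z : Eu n₃) (p : Eu m) :
    ConvexOn ℝ univ fun ξ => P.L x ξ z p - P.g ξ :=
  ((convexOn_inner_add_half_mul_sq_norm p (P.A x + P.C z) P.hα_pos.le P.B).add_const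
    (P.f x + P.h z)).congr fun ξ _ => by
      simp only [L, Lag, Pi.add_apply, add_comm (P.A x) (P.B ξ), add_assoc (P.B ξ)]
      ring

theorem convexOn_L_sub_h (x : Eu n₁) (y : Eu n₂) (p : Eu m) :
    ConvexOn ℝ univ fun ξ => P.L x y ξ p - P.h ξ :=
  ((convexOn_inner_add_half_mul_sq_norm p (P.A x + P.B y) P.hα_pos.le P.C).add_const
    (P.f x + P.g y)).congr fun ξ _ => by
      simp only [L, Lag, Pi.add_apply, add_comm _ (P.C ξ)]
      ring

theorem L_descent_x (k : ℕ) :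
    P.L (P.x (k+1)) (P.y k) (P.z k) (P.p k) + P.μ₁ / 2 * ‖P.x (k+1) - P.x k‖ ^ 2
      ≤ P.L (P.x k) (P.y k) (P.z k) (P.p k) :=
  bregman_prox_step_descent (P.convexOn_L_sub_f _ _ _) P.hφ₁_convex (P.hgrad_φ₁ _)
    (P.hsc₁.imp strongConvexOn_iff_convex.mpr strongConvexOn_iff_convex.mpr)
    (Φ := fun ξ => P.L ξ (P.y k) (P.z k) (P.p k)) (P.hx_min k)

theorem L_descent_y (k : ℕ) :
    P.L (P.x (k+1)) (P.y (k+1)) (P.z k) (P.p k) + P.μ₂ / 2 * ‖P.y (k+1) - P.y k‖ ^ 2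
      ≤ P.L (P.x (k+1)) (P.y k) (P.z k) (P.p k) :=
  bregman_prox_step_descent (P.convexOn_L_sub_g _ _ _) P.hφ₂_convex (P.hgrad_φ₂ _)
    (P.hsc₂.imp strongConvexOn_iff_convex.mpr strongConvexOn_iff_convex.mpr)
    (Φ := fun ξ => P.L (P.x (k+1)) ξ (P.z k) (P.p k)) (P.hy_min k)

theorem L_descent_z (k : ℕ) :
    P.L (P.x (k+1)) (P.y (k+1)) (P.z (k+1)) (P.p k) + P.μ₃ / 2 * ‖P.z (k+1) - P.z k‖ ^ 2
      ≤ P.L (P.x (k+1)) (P.y (k+1)) (P.z k) (P.p k) :=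
  bregman_prox_step_descent (P.convexOn_L_sub_h _ _ _) P.hφ₃_convex (P.hgrad_φ₃ _)
    (P.hsc₃.imp strongConvexOn_iff_convex.mpr strongConvexOn_iff_convex.mpr)
    (Φ := fun ξ => P.L (P.x (k+1)) (P.y (k+1)) ξ (P.p k)) (P.hz_min k)

theorem p_succ_sub (k : ℕ) :
    P.p (k+1) - P.p k = P.α • (P.A (P.x (k+1)) + P.B (P.y (k+1)) + P.C (P.z (k+1))) := by
  rw [P.hp_upd k, add_sub_cancel_left]

theorem L_dual_step (k : ℕ) :
    P.L (P.x (k+1)) (P.y (k+1)) (P.z (k+1)) (P.p (k+1))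
      = P.L (P.x (k+1)) (P.y (k+1)) (P.z (k+1)) (P.p k) + ‖P.p (k+1) - P.p k‖ ^ 2 / P.α := by
  have hα := P.hα_pos.ne'
  rw [P.p_succ_sub, norm_smul, mul_pow, Real.norm_eq_abs, sq_abs]
  simp only [L, Lag]
  rw [P.hp_upd k, inner_add_left, real_inner_smul_left, real_inner_self_eq_norm_sq]
  field_simp
  ring

theorem L_descent (k : ℕ) :
    P.L (P.x (k+1)) (P.y (k+1)) (P.z (k+1)) (P.p (k+1))
      + P.μ₁ / 2 * ‖P.x (k+1) - P.x k‖ ^ 2 + P.μ₂ / 2 * ‖P.y (k+1) - P.y k‖ ^ 2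
      + P.μ₃ / 2 * ‖P.z (k+1) - P.z k‖ ^ 2
    ≤ P.L (P.x k) (P.y k) (P.z k) (P.p k) + ‖P.p (k+1) - P.p k‖ ^ 2 / P.α := by
  linarith [P.L_descent_x k, P.L_descent_y k, P.L_descent_z k, P.L_dual_step k]

theorem hasGradientAt_L_z (x : Eu n₁) (y : Eu n₂) (p : Eu m) (ζ : Eu n₃) :
    HasGradientAt (fun ξ => P.L x y ξ p)
      (P.h' ζ + ContinuousLinearMap.adjoint P.C (p + P.α • (P.A x + P.B y + P.C ζ))) ζ := by
  have h := ((hasGradientAt_const ζ (P.f x + P.g y)).add (P.hgrad_h ζ)).add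
    (hasGradientAt_inner_add_half_mul_sq_norm p (P.A x + P.B y) P.α P.C ζ)
  rw [zero_add, add_comm (P.C ζ)] at h
  refine h.congr_of_eventuallyEq (Eventually.of_forall fun ξ => ?_)
  simp only [L, Lag, add_comm _ (P.C ξ)]
  ring

theorem adjoint_C_p_succ (k : ℕ) :
    ContinuousLinearMap.adjoint P.C (P.p (k+1))
      = P.φ₃' (P.z k) - P.φ₃' (P.z (k+1)) - P.h' (P.z (k+1)) := by
  have h := bregman_prox_step_first_order (P.hasGradientAt_L_z _ _ _ _) (P.hgrad_φ₃ _)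
    (P.hz_min k)
  rw [← P.hp_upd k] at h
  exact sub_eq_zero.mp (by rw [← h]; abel)

theorem dual_step_le (k : ℕ) :
    P.σC * ‖P.p (k+2) - P.p (k+1)‖ ^ 2
      ≤ 2 * (P.ℓh + P.ℓ₃) ^ 2 * ‖P.z (k+2) - P.z (k+1)‖ ^ 2
        + 2 * P.ℓ₃ ^ 2 * ‖P.z (k+1) - P.z k‖ ^ 2 := by
  set a := ‖P.z (k+2) - P.z (k+1)‖
  set b := ‖P.z (k+1) - P.z k‖
  set U := P.φ₃' (P.z (k+1)) - P.φ₃' (P.z k)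
  set V := P.φ₃' (P.z (k+2)) - P.φ₃' (P.z (k+1))
  set W := P.h' (P.z (k+2)) - P.h' (P.z (k+1))
  have hdiff : ContinuousLinearMap.adjoint P.C (P.p (k+2) - P.p (k+1)) = U - V - W := by
    rw [map_sub, P.adjoint_C_p_succ, P.adjoint_C_p_succ]
    simp only [U, V, W]
    abel
  have hnorm : ‖ContinuousLinearMap.adjoint P.C (P.p (k+2) - P.p (k+1))‖
      ≤ (P.ℓh + P.ℓ₃) * a + P.ℓ₃ * b :=
    calc ‖ContinuousLinearMap.adjoint P.C (P.p (k+2) - P.p (k+1))‖ = ‖U - V - W‖ := by rw [hdiff]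
      _ ≤ ‖U - V‖ + ‖W‖ := norm_sub_le _ _
      _ ≤ ‖U‖ + ‖V‖ + ‖W‖ := by gcongr; exact norm_sub_le _ _
      _ ≤ P.ℓ₃ * b + P.ℓ₃ * a + P.ℓh * a :=
          add_le_add (add_le_add (P.hlip_φ₃ _ _) (P.hlip_φ₃ _ _)) (P.hlip_h _ _)
      _ = (P.ℓh + P.ℓ₃) * a + P.ℓ₃ * b := by ring
  calc P.σC * ‖P.p (k+2) - P.p (k+1)‖ ^ 2
      ≤ ‖ContinuousLinearMap.adjoint P.C (P.p (k+2) - P.p (k+1))‖ ^ 2 := P.hC_rank _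
    _ ≤ ((P.ℓh + P.ℓ₃) * a + P.ℓ₃ * b) ^ 2 := by gcongr
    _ ≤ _ := by linear_combination add_sq_le (a := (P.ℓh + P.ℓ₃) * a) (b := P.ℓ₃ * b)

theorem exists_norm_p_le {M : ℝ} (hz : ∀ k, ‖P.z k‖ ≤ M) : ∃ Mp : ℝ, ∀ k, ‖P.p k‖ ≤ Mp := by
  set K := (P.ℓh * M + ‖P.h' 0‖) + 2 * (P.ℓ₃ * M + ‖P.φ₃' 0‖)
  have hadj : ∀ k, ‖ContinuousLinearMap.adjoint P.C (P.p (k+1))‖ ≤ K := by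
    intro k
    rw [P.adjoint_C_p_succ]
    have hφk := norm_le_of_lipschitz_of_norm_le P.hℓ₃_nonneg P.hlip_φ₃ (hz k)
    have hφk1 := norm_le_of_lipschitz_of_norm_le P.hℓ₃_nonneg P.hlip_φ₃ (hz (k+1))
    have hhk1 := norm_le_of_lipschitz_of_norm_le P.hℓh_nonneg P.hlip_h (hz (k+1))
    linarith [norm_sub_le (P.φ₃' (P.z k) - P.φ₃' (P.z (k+1))) (P.h' (P.z (k+1))),
      norm_sub_le (P.φ₃' (P.z k)) (P.φ₃' (P.z (k+1)))]
  refine ⟨max ‖P.p 0‖ √(K ^ 2 / P.σC), fun k => ?_⟩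
  rcases k with _ | k
  · exact le_max_left _ _
  · refine le_max_of_le_right ((Real.le_sqrt (norm_nonneg _) ?_).mpr ?_)
    · exact div_nonneg (sq_nonneg K) P.hσC_pos.le
    rw [le_div_iff₀ P.hσC_pos, mul_comm]
    calc P.σC * ‖P.p (k+1)‖ ^ 2 ≤ ‖ContinuousLinearMap.adjoint P.C (P.p (k+1))‖ ^ 2 :=
          P.hC_rank _
      _ ≤ K ^ 2 := by gcongr; exact hadj k

theorem exists_le_L (M Mp : ℝ) : ∃ c : ℝ, ∀ x y z p, ‖x‖ ≤ M → ‖y‖ ≤ M → ‖z‖ ≤ M → ‖p‖ ≤ Mp →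
    c ≤ P.L x y z p := by
  have hh : Continuous P.h := continuous_iff_continuousAt.2 fun v => (P.hgrad_h v).continuousAt
  obtain ⟨cf, hcf⟩ := (P.hf_lsc.lowerSemicontinuousOn _).bddBelow_of_isCompact
    (isCompact_closedBall (0 : Eu n₁) M)
  obtain ⟨cg, hcg⟩ := (P.hg_lsc.lowerSemicontinuousOn _).bddBelow_of_isCompact
    (isCompact_closedBall (0 : Eu n₂) M)
  obtain ⟨ch, hch⟩ := (hh.lowerSemicontinuous.lowerSemicontinuousOn _).bddBelow_of_isCompact
    (isCompact_closedBall (0 : Eu n₃) M)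
  set R := (‖P.A‖ + ‖P.B‖ + ‖P.C‖) * M
  refine ⟨cf + cg + ch - Mp * R, fun x y z p hx hy hz hp => ?_⟩
  have hres : ‖P.A x + P.B y + P.C z‖ ≤ R := by
    have hA := (P.A.le_opNorm x).trans (mul_le_mul_of_nonneg_left hx (norm_nonneg _))
    have hB := (P.B.le_opNorm y).trans (mul_le_mul_of_nonneg_left hy (norm_nonneg _))
    have hC := (P.C.le_opNorm z).trans (mul_le_mul_of_nonneg_left hz (norm_nonneg _))
    linarith [norm_add₃_le (a := P.A x) (b := P.B y) (c := P.C z)]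
  have hinner : -(Mp * R) ≤ ⟪p, P.A x + P.B y + P.C z⟫ :=
    (neg_le_neg (mul_le_mul hp hres (norm_nonneg _) ((norm_nonneg _).trans hp))).trans
      (neg_le_of_abs_le ((abs_real_inner_le_norm _ _)))
  have := hcf (mem_image_of_mem _ (mem_closedBall_zero_iff.2 hx))
  have := hcg (mem_image_of_mem _ (mem_closedBall_zero_iff.2 hy))
  have := hch (mem_image_of_mem _ (mem_closedBall_zero_iff.2 hz))
  have : 0 ≤ P.α / 2 * ‖P.A x + P.B y + P.C z‖ ^ 2 := by have := P.hα_pos; positivity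
  simp only [L, Lag]
  linarith

theorem σ0_nonneg : 0 ≤ P.σ0 :=
  div_nonneg (by positivity) (mul_pos P.hα_pos P.hσC_pos).le

theorem σ1_pos : 0 < P.σ1 := by
  have hD := mul_pos P.hα_pos P.hσC_pos
  have hgap : 0 < P.μ₃ - 4 * (P.ℓh + P.ℓ₃) ^ 2 / (P.α * P.σC) - 4 * P.ℓ₃ ^ 2 / (P.α * P.σC) := by
    have := P.hα_large
    rw [div_lt_iff₀ (mul_pos P.hμ₃_pos P.hσC_pos)] at this
    rw [sub_sub, ← add_div, sub_pos, div_lt_iff₀ hD]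
    linarith
  have := lt_min P.hμ₁_pos (lt_min P.hμ₂_pos hgap)
  rw [σ1]
  positivity

theorem σ1_le : P.σ1 ≤ P.μ₁ / 2 ∧ P.σ1 ≤ P.μ₂ / 2 ∧
    P.σ1 + P.σ0 + 2 * (P.ℓh + P.ℓ₃) ^ 2 / (P.α * P.σC) ≤ P.μ₃ / 2 := by
  unfold σ1 σ0
  set D := P.α * P.σC
  set g := P.μ₃ - 4 * (P.ℓh + P.ℓ₃) ^ 2 / D - 4 * P.ℓ₃ ^ 2 / D
  have h1 := min_le_left P.μ₁ (min P.μ₂ g)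
  have h2 := (min_le_right P.μ₁ (min P.μ₂ g)).trans (min_le_left P.μ₂ g)
  have h3 := (min_le_right P.μ₁ (min P.μ₂ g)).trans (min_le_right P.μ₂ g)
  have hsplit : 2 * P.ℓ₃ ^ 2 / D + 2 * (P.ℓh + P.ℓ₃) ^ 2 / D
      = (4 * (P.ℓh + P.ℓ₃) ^ 2 / D + 4 * P.ℓ₃ ^ 2 / D) / 2 := by ring
  refine ⟨by linarith, by linarith, by linarith⟩

/-- The `σ₀`-term pays for the part of the next dual step controlled by the current `z`-step. -/
def merit (k : ℕ) : ℝ := P.Lhat (P.x (k+1)) (P.y (k+1)) (P.z (k+1)) (P.p (k+1)) (P.z k)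

def primalStep (k : ℕ) : ℝ :=
  ‖P.x (k+1) - P.x k‖ ^ 2 + ‖P.y (k+1) - P.y k‖ ^ 2 + ‖P.z (k+1) - P.z k‖ ^ 2

theorem primalStep_nonneg (k : ℕ) : 0 ≤ P.primalStep k := by
  rw [primalStep]
  positivity

theorem merit_succ_add_le (k : ℕ) : P.merit (k+1) + P.σ1 * P.primalStep (k+1) ≤ P.merit k := by
  have hD := mul_pos P.hα_pos P.hσC_pos
  have hdual : ‖P.p (k+2) - P.p (k+1)‖ ^ 2 / P.α
      ≤ 2 * (P.ℓh + P.ℓ₃) ^ 2 / (P.α * P.σC) * ‖P.z (k+2) - P.z (k+1)‖ ^ 2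
        + P.σ0 * ‖P.z (k+1) - P.z k‖ ^ 2 := by
    calc ‖P.p (k+2) - P.p (k+1)‖ ^ 2 / P.α
        = P.σC * ‖P.p (k+2) - P.p (k+1)‖ ^ 2 / (P.α * P.σC) := by
          field_simp [P.hσC_pos.ne']
      _ ≤ (2 * (P.ℓh + P.ℓ₃) ^ 2 * ‖P.z (k+2) - P.z (k+1)‖ ^ 2
            + 2 * P.ℓ₃ ^ 2 * ‖P.z (k+1) - P.z k‖ ^ 2) / (P.α * P.σC) :=
          div_le_div_of_nonneg_right (P.dual_step_le k) hD.le
      _ = _ := by rw [σ0]; ring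
  have hx := mul_le_mul_of_nonneg_right P.σ1_le.1 (sq_nonneg ‖P.x (k+2) - P.x (k+1)‖)
  have hy := mul_le_mul_of_nonneg_right P.σ1_le.2.1 (sq_nonneg ‖P.y (k+2) - P.y (k+1)‖)
  have hz := mul_le_mul_of_nonneg_right P.σ1_le.2.2 (sq_nonneg ‖P.z (k+2) - P.z (k+1)‖)
  have hdesc := P.L_descent (k+1)
  simp only [merit, Lhat, primalStep]
  linarith

theorem summable_primalStep (M Mp : ℝ)
    (hM : ∀ k, ‖P.x k‖ ≤ M ∧ ‖P.y k‖ ≤ M ∧ ‖P.z k‖ ≤ M) (hp : ∀ k, ‖P.p k‖ ≤ Mp) :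
    Summable P.primalStep := by
  obtain ⟨c, hc⟩ := P.exists_le_L M Mp
  have hmerit : ∀ k, c ≤ P.merit k := fun k => by
    have := hc _ _ _ _ (hM (k+1)).1 (hM (k+1)).2.1 (hM (k+1)).2.2 (hp (k+1))
    have := mul_nonneg P.σ0_nonneg (sq_nonneg ‖P.z (k+1) - P.z k‖)
    simp only [merit, Lhat]
    linarith
  have hsucc := summable_of_succ_add_le (fun k => mul_nonneg P.σ1_pos.le (P.primalStep_nonneg _))
    P.merit_succ_add_le hmerit
  exact (summable_nat_add_iff 1).mp ((summable_mul_left_iff P.σ1_pos.ne').mp hsucc)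

theorem dw2_succ_le (k : ℕ) :
    P.dw2 (k+1) ≤ (1 + 2 * (P.ℓh + P.ℓ₃) ^ 2 / P.σC) * P.primalStep (k+1)
      + 2 * P.ℓ₃ ^ 2 / P.σC * P.primalStep k := by
  have hdual : ‖P.p (k+2) - P.p (k+1)‖ ^ 2
      ≤ 2 * (P.ℓh + P.ℓ₃) ^ 2 / P.σC * ‖P.z (k+2) - P.z (k+1)‖ ^ 2
        + 2 * P.ℓ₃ ^ 2 / P.σC * ‖P.z (k+1) - P.z k‖ ^ 2 := by
    rw [div_mul_eq_mul_div, div_mul_eq_mul_div, ← add_div, le_div_iff₀ P.hσC_pos]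
    linarith [P.dual_step_le k]
  have hz1 : ‖P.z (k+2) - P.z (k+1)‖ ^ 2 ≤ P.primalStep (k+1) := by
    rw [primalStep]
    linarith [sq_nonneg ‖P.x (k+2) - P.x (k+1)‖, sq_nonneg ‖P.y (k+2) - P.y (k+1)‖]
  have hz0 : ‖P.z (k+1) - P.z k‖ ^ 2 ≤ P.primalStep k := by
    rw [primalStep]
    linarith [sq_nonneg ‖P.x (k+1) - P.x k‖, sq_nonneg ‖P.y (k+1) - P.y k‖]
  have hc₁ : 0 ≤ 2 * (P.ℓh + P.ℓ₃) ^ 2 / P.σC := div_nonneg (by positivity) P.hσC_pos.le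
  have hc₀ : 0 ≤ 2 * P.ℓ₃ ^ 2 / P.σC := div_nonneg (by positivity) P.hσC_pos.le
  have : P.dw2 (k+1) = P.primalStep (k+1) + ‖P.p (k+2) - P.p (k+1)‖ ^ 2 := rfl
  linarith [mul_le_mul_of_nonneg_left hz1 hc₁, mul_le_mul_of_nonneg_left hz0 hc₀]

theorem summable_dw2_succ (h : Summable P.primalStep) : Summable fun k => P.dw2 (k+1) :=
  Summable.of_nonneg_of_le (fun k => by rw [dw2]; positivity) P.dw2_succ_le
    ((((summable_nat_add_iff 1).mpr h).mul_left _).add (h.mul_left _))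

end BADMM

/-- if the primal iterates are bounded, then the dual iterates are bounded,
the series `∑_{k≥1} ‖w^{k+1}−w^k‖²` is finite, and `‖w^{k+1}−w^k‖ → 0`. -/
theorem badmm_asymptotic_regularity {n₁ n₂ n₃ m : ℕ} (P : BADMM n₁ n₂ n₃ m)
    (hbdd : ∃ M : ℝ, ∀ k : ℕ, ‖P.x k‖ ≤ M ∧ ‖P.y k‖ ≤ M ∧ ‖P.z k‖ ≤ M) :
    (∃ M : ℝ, ∀ k : ℕ, ‖P.p k‖ ≤ M) ∧
      Summable (fun k : ℕ => P.dw2 (k+1)) ∧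
      Tendsto (fun k : ℕ => Real.sqrt (P.dw2 k)) atTop (nhds 0) := by
  obtain ⟨M, hM⟩ := hbdd
  obtain ⟨Mp, hp⟩ := P.exists_norm_p_le fun k => (hM k).2.2
  have hdw2 := P.summable_dw2_succ (P.summable_primalStep M Mp hM hp)
  refine ⟨⟨Mp, hp⟩, hdw2, ?_⟩
  have hlim : Tendsto P.dw2 atTop (nhds 0) :=
    (tendsto_add_atTop_iff_nat 1).mp hdw2.tendsto_atTop_zero
  simpa using hlim.sqrt
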